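/- arXiv:1603.03002 — 2 statements merged into one kernel-verified Lean document; each statement's English description precedes it below -/
import Mathlib

section
/- Let A be a special automaton over the free group F of rank m ≥ 2 with final state z₀, and let A₂ be the automaton obtained by restricting A to the set of states reachable from z₀, with z₀ as both initial and final state. If A₂ is not Σ-complete (i.e. there is a state s of A₂, of type x, and a label y ∈ Σ with y ≠ x^{-1}, such that δ(s,y) is undefined), then L(A) is exponentially λ-measurable: there exists δ ∈ (0,1) such that f_k(L(A)) < δ^k for all sufficiently large k. -/
/-!
A word read from a state of type `a` is reduced and does not start with `a⁻¹`, so at most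
`(2m-1)^k` words of length `k` can be read from a typed state. The state `s` of `A₂` with a
missing transition `b` is reachable from every state by a word of length `< N`; following that
word by `b`'s gives a reduced word of length `N` which cannot be read, so from every typed state
at most `(2m-1)^N - 1` words of length `N` are readable. Cutting words into blocks of length `N`
gives `n_{k+1}(L(A)) ≤ 2m ((2m-1)^N - 1)^⌊k/N⌋ (2m-1)^(k mod N)`, hence
`f_{k+1}(L(A)) ≤ (1 - (2m-1)^(-N))^⌊k/N⌋`, which decays exponentially.
-/

open Filter Set

noncomputable section

/-- The free group of rank `m`. -/
abbrev FG (m : ℕ) := FreeGroup (Fin m)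

/-- The length of the reduced word of `g`. -/
def glen {m : ℕ} (g : FG m) : ℕ := (FreeGroup.toWord g).length

/-- The cardinality of the sphere of radius `k` in the free group of rank `m`,
as a real number: `1` if `k = 0` and `2m(2m-1)^(k-1)` otherwise. -/
def sphereCard (m k : ℕ) : ℝ :=
  if k = 0 then 1 else 2 * (m : ℝ) * (2 * (m : ℝ) - 1) ^ (k - 1)

/-- `n_k(R)`: the number of elements of length `k` in `R`. -/
def nk {m : ℕ} (R : Set (FG m)) (k : ℕ) : ℕ := {g ∈ R | glen g = k}.ncard

/-- `f_k(R) = n_k(R) / |S_k|`: the frequency of elements of `R` among words of length `k`. -/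
def fk {m : ℕ} (R : Set (FG m)) (k : ℕ) : ℝ := (nk R k : ℝ) / sphereCard m k

/-- The frequency generating function `g_R(t) = ∑ f_k(R) t^k`. -/
def genFun {m : ℕ} (R : Set (FG m)) (t : ℝ) : ℝ := ∑' k : ℕ, fk R k * t ^ k

/-- The adjusted generating function `g*_R(t) = ∑ n_k(R) (t/(2m-1))^k`. -/
def genFunStar {m : ℕ} (R : Set (FG m)) (t : ℝ) : ℝ :=
  ∑' k : ℕ, (nk R k : ℝ) * (t / (2 * (m : ℝ) - 1)) ^ k

/-- `R` is thick: `lim_{t→1⁻} (1-t)·g_R(t)` exists and is positive. -/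
def IsThick {m : ℕ} (R : Set (FG m)) : Prop :=
  ∃ c : ℝ, 0 < c ∧
    Tendsto (fun t => (1 - t) * genFun R t) (nhdsWithin 1 (Set.Iio 1)) (nhds c)

/-- `R` is exponentially negligible (exponentially λ-measurable): there is `δ ∈ (0,1)`
with `f_k(R) < δ^k` for all sufficiently large `k`. -/
def ExpNegligible {m : ℕ} (R : Set (FG m)) : Prop :=
  ∃ δ : ℝ, 0 < δ ∧ δ < 1 ∧ ∀ᶠ k : ℕ in atTop, fk R k < δ ^ k

/-- `R ⊆ F` is a regular set if the language of reduced words of its elements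
(over the alphabet `Σ = X ∪ X⁻¹`, encoded as `Fin m × Bool`) is a regular language. -/
def IsRegularSet {m : ℕ} (R : Set (FG m)) : Prop :=
  Language.IsRegular {w : List (Fin m × Bool) | ∃ g ∈ R, FreeGroup.toWord g = w}

/-- The cone `C(w) = { wf : |wf| = |w| + |f| }`. -/
def cone {m : ℕ} (w : FG m) : Set (FG m) :=
  {g | ∃ f, g = w * f ∧ glen g = glen w + glen f}

/-- The right cone `C[w] = { fw : |fw| = |f| + |w| }`. -/
def coneR {m : ℕ} (w : FG m) : Set (FG m) :=
  {g | ∃ f, g = f * w ∧ glen g = glen f + glen w}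

/-- The double-based cone `C(u,v) = { ufv : |ufv| = |u| + |f| + |v| }`. -/
def dcone {m : ℕ} (u v : FG m) : Set (FG m) :=
  {g | ∃ f, g = u * f * v ∧ glen g = glen u + glen f + glen v}

/-- The prefix closure of `R`. -/
def prefixClosure {m : ℕ} (R : Set (FG m)) : Set (FG m) :=
  {p | ∃ g ∈ R, ∃ s, g = p * s ∧ glen g = glen p + glen s}

/-- A finite deterministic partial automaton over the alphabet
`Σ = X ∪ X⁻¹` (encoded as `Fin m × Bool`), with one initial and one final state. -/
structure PAut (m : ℕ) where
  n : ℕ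
  step : Fin n → Fin m × Bool → Option (Fin n)
  start : Fin n
  accept : Fin n

namespace PAut

variable {m : ℕ}

/-- Run the automaton from state `s` on the word `w`. -/
def evalFrom (A : PAut m) : Fin A.n → List (Fin m × Bool) → Option (Fin A.n)
  | s, [] => some s
  | s, a :: w =>
    match A.step s a with
    | none => none
    | some s' => A.evalFrom s' w

/-- The set of words accepted by `A`. -/
def words (A : PAut m) : Set (List (Fin m × Bool)) :=
  {w | A.evalFrom A.start w = some A.accept}

/-- The language of `A`, identified with a subset of the free group. -/
def lang (A : PAut m) : Set (FG m) :=
  (fun w => FreeGroup.mk w) '' A.words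

/-- Conditions (c)–(f) of a special automaton:
(c) every state is reachable from the initial state;
(d) the final state is reachable from every state;
(e) all transitions entering a given state carry the same label (the type of the state);
(f) if a state has type `x`, no transition labeled `x⁻¹` leaves it. -/
def CoreSpecial (A : PAut m) : Prop :=
  (∀ s, ∃ w, A.evalFrom A.start w = some s) ∧
  (∀ s, ∃ w, A.evalFrom s w = some A.accept) ∧
  (∀ s₁ a₁ s₂ a₂ s, A.step s₁ a₁ = some s → A.step s₂ a₂ = some s → a₁ = a₂) ∧
  (∀ s' a s, A.step s' a = some s → A.step s (a.1, !a.2) = none)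

/-- A special automaton over the free group: conditions (a)–(f), with distinct
initial and final states and no transition entering the initial state. -/
def IsSpecial (A : PAut m) : Prop :=
  A.start ≠ A.accept ∧ (∀ s a, A.step s a ≠ some A.start) ∧ A.CoreSpecial

/-- A special monoid automaton: conditions (c)–(f), with the initial state equal to
the final state. -/
def IsSpecialMonoidAut (A : PAut m) : Prop :=
  A.start = A.accept ∧ A.CoreSpecial

/-- `A` is `Σ`-complete: every state `s` has a type `x` and for every label
`y ≠ x⁻¹` the transition `δ(s,y)` is defined. -/
def SigmaComplete (A : PAut m) : Prop :=
  ∀ s, ∃ a, (∃ s', A.step s' a = some s) ∧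
    ∀ b, b ≠ (a.1, !a.2) → (A.step s b).isSome

end PAut

/-- A special monoid: the language of a special monoid automaton. -/
def IsSpecialMonoid {m : ℕ} (M : Set (FG m)) : Prop :=
  ∃ A : PAut m, A.IsSpecialMonoidAut ∧ M = A.lang

/-- A thick monoid: the language of a `Σ`-complete special monoid automaton. -/
def IsThickMonoid {m : ℕ} (M : Set (FG m)) : Prop :=
  ∃ A : PAut m, A.IsSpecialMonoidAut ∧ A.SigmaComplete ∧ M = A.lang

namespace FreeGroup

theorem ncard_setOf_isReduced_cons_le {α : Type*} [Fintype α] (a : α × Bool) (k : ℕ) :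
    {w : List (α × Bool) | w.length = k ∧ IsReduced (a :: w)}.ncard
      ≤ (2 * Fintype.card α - 1) ^ k := by
  classical
  induction k generalizing a with
  | zero =>
    calc _ ≤ ({[]} : Set (List (α × Bool))).ncard :=
          ncard_le_ncard (fun w hw => List.eq_nil_of_length_eq_zero hw.1)
      _ = _ := by simp
  | succ k ih =>
    set S := fun b : α × Bool => {w : List (α × Bool) | w.length = k ∧ IsReduced (b :: w)}
    have hS : ∀ b, (S b).Finite := fun b => (List.finite_length_eq _ k).subset fun _ hw => hw.1
    have hsub : {w | w.length = k + 1 ∧ IsReduced (a :: w)}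
        ⊆ ⋃ b ∈ Finset.univ.erase (a.1, !a.2), (b :: ·) '' S b := by
      rintro (_ | ⟨b, v⟩) ⟨hlen, hred⟩
      · simp at hlen
      rw [isReduced_cons_cons] at hred
      simp only [mem_iUnion, Finset.mem_erase, Finset.mem_univ, and_true]
      refine ⟨b, ?_, v, ⟨by simpa using hlen, hred.2⟩, rfl⟩
      rintro rfl
      simp at hred
    calc _ ≤ (⋃ b ∈ Finset.univ.erase (a.1, !a.2), (b :: ·) '' S b).ncard :=
          ncard_le_ncard hsub (Finset.finite_toSet _ |>.biUnion fun b _ => (hS b).image _)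
      _ ≤ ∑ b ∈ Finset.univ.erase (a.1, !a.2), ((b :: ·) '' S b).ncard :=
          Finset.set_ncard_biUnion_le _ _
      _ ≤ ∑ _b ∈ Finset.univ.erase (a.1, !a.2), (2 * Fintype.card α - 1) ^ k :=
          Finset.sum_le_sum fun b _ =>
            (ncard_image_of_injective _ List.cons_injective).trans_le (ih b)
      _ = _ := by
        rw [Finset.sum_const, Finset.card_erase_of_mem (Finset.mem_univ _), Finset.card_univ,
          Fintype.card_prod, Fintype.card_bool, smul_eq_mul, pow_succ, mul_comm, mul_comm _ 2]

end FreeGroup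

theorem Real.exists_lt_pow_of_lt_one {θ : ℝ} (hθ : θ < 1) (n : ℕ) :
    ∃ δ, 0 < δ ∧ δ < 1 ∧ θ < δ ^ n := by
  have hpow : ∀ᶠ δ in nhdsWithin (1 : ℝ) (Iio 1), θ < δ ^ n :=
    nhdsWithin_le_nhds <| (continuous_pow n).tendsto' 1 1 (one_pow n) |>.eventually
      (lt_mem_nhds hθ)
  have hpos : ∀ᶠ δ in nhdsWithin (1 : ℝ) (Iio 1), 0 < δ :=
    nhdsWithin_le_nhds (lt_mem_nhds one_pos)
  obtain ⟨δ, hδ₀, hδ₁, hδ⟩ := (hpos.and (eventually_mem_nhdsWithin.and hpow)).exists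
  exact ⟨δ, hδ₀, hδ₁, hδ⟩

theorem exists_pow_lt_of_le_pow_div {f : ℕ → ℝ} {θ : ℝ} {N : ℕ} (hN : 0 < N) (hθ₀ : 0 ≤ θ)
    (hθ₁ : θ < 1) (hf : ∀ k, f (k + 1) ≤ θ ^ (k / N)) :
    ∃ δ, 0 < δ ∧ δ < 1 ∧ ∀ᶠ k in atTop, f k < δ ^ k := by
  obtain ⟨δ, hδ₀, hδ₁, hθδ⟩ := Real.exists_lt_pow_of_lt_one hθ₁ (2 * N)
  refine ⟨δ, hδ₀, hδ₁, eventually_atTop.2 ⟨2 * N + 1, fun k hk => ?_⟩⟩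
  obtain ⟨k, rfl⟩ : ∃ k', k = k' + 1 := ⟨k - 1, by omega⟩
  have hq : 2 ≤ k / N := (Nat.le_div_iff_mul_le hN).2 (by omega)
  have hkq : k + 1 ≤ 2 * N * (k / N) := by
    have := Nat.div_add_mod k N
    have := Nat.mod_lt k hN
    rw [mul_assoc]
    generalize N * (k / N) = P at *
    omega
  calc f (k + 1) ≤ θ ^ (k / N) := hf k
    _ < (δ ^ (2 * N)) ^ (k / N) := pow_lt_pow_left₀ hθδ hθ₀ (by omega)
    _ = δ ^ (2 * N * (k / N)) := (pow_mul _ _ _).symm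
    _ ≤ δ ^ (k + 1) := pow_le_pow_of_le_one hδ₀.le hδ₁.le hkq

namespace PAut

variable {m : ℕ} (A : PAut m)

def HasType (t : Fin A.n) (a : Fin m × Bool) : Prop := ∃ s, A.step s a = some t

def readable (t : Fin A.n) (k : ℕ) : Set (List (Fin m × Bool)) :=
  {w | w.length = k ∧ (A.evalFrom t w).isSome}

def NoBacktrack : Prop := ∀ s' a s, A.step s' a = some s → A.step s (a.1, !a.2) = none

variable {A}

theorem readable_finite (t : Fin A.n) (k : ℕ) : (A.readable t k).Finite :=
  (List.finite_length_eq _ k).subset fun _ hw => hw.1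

theorem evalFrom_cons (t : Fin A.n) (a : Fin m × Bool) (w : List (Fin m × Bool)) :
    A.evalFrom t (a :: w) = (A.step t a).bind (A.evalFrom · w) := by
  simp only [evalFrom]
  cases A.step t a <;> rfl

theorem evalFrom_append (t : Fin A.n) (u v : List (Fin m × Bool)) :
    A.evalFrom t (u ++ v) = (A.evalFrom t u).bind (A.evalFrom · v) := by
  induction u generalizing t with
  | nil => rfl
  | cons a u ih => simp only [List.cons_append, evalFrom_cons, ih, Option.bind_assoc]

theorem isSome_evalFrom_cons {t : Fin A.n} {a : Fin m × Bool} {w : List (Fin m × Bool)} :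
    (A.evalFrom t (a :: w)).isSome ↔
      ∃ t', A.step t a = some t' ∧ (A.evalFrom t' w).isSome := by
  rw [evalFrom_cons]
  cases A.step t a <;> simp

theorem hasType_getLast_of_evalFrom_cons {t s : Fin A.n} {a : Fin m × Bool}
    {w : List (Fin m × Bool)} (h : A.evalFrom t (a :: w) = some s) :
    A.HasType s ((a :: w).getLast (List.cons_ne_nil a w)) := by
  induction w generalizing t a with
  | nil =>
    rw [evalFrom_cons, Option.bind_eq_some_iff] at h
    obtain ⟨t', ht', ⟨⟩⟩ := h
    exact ⟨t, ht'⟩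
  | cons b w ih =>
    rw [evalFrom_cons, Option.bind_eq_some_iff] at h
    obtain ⟨t', -, h⟩ := h
    simpa only [List.getLast_cons_cons] using ih h

theorem HasType.evalFrom {t s : Fin A.n} {a : Fin m × Bool} {w : List (Fin m × Bool)}
    (ht : A.HasType t a) (h : A.evalFrom t w = some s) :
    A.HasType s ((a :: w).getLast (List.cons_ne_nil a w)) := by
  cases w with
  | nil => cases h; exact ht
  | cons b w => simpa only [List.getLast_cons_cons] using hasType_getLast_of_evalFrom_cons h

theorem HasType.isReduced_cons (hf : A.NoBacktrack) {t : Fin A.n} {a : Fin m × Bool}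
    {w : List (Fin m × Bool)} (ht : A.HasType t a) (hw : (A.evalFrom t w).isSome) :
    FreeGroup.IsReduced (a :: w) := by
  induction w generalizing t a with
  | nil => exact .singleton
  | cons b w ih =>
    obtain ⟨t', hb, hw'⟩ := isSome_evalFrom_cons.1 hw
    refine FreeGroup.isReduced_cons_cons.2 ⟨fun h₁ => ?_, ih ⟨t, hb⟩ hw'⟩
    by_contra h₂
    obtain ⟨s, hs⟩ := ht
    have hba : b = (a.1, !a.2) := Prod.ext h₁.symm (Bool.eq_not_iff.2 (Ne.symm h₂))
    rw [hba, hf s a t hs] at hb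
    cases hb

theorem isReduced_of_evalFrom (hf : A.NoBacktrack) {t : Fin A.n} {w : List (Fin m × Bool)}
    (hw : (A.evalFrom t w).isSome) : FreeGroup.IsReduced w := by
  cases w with
  | nil => exact .nil
  | cons b w =>
    obtain ⟨t', hb, hw'⟩ := isSome_evalFrom_cons.1 hw
    exact HasType.isReduced_cons hf ⟨t, hb⟩ hw'

theorem ncard_readable_le_of_hasType (hf : A.NoBacktrack) {t : Fin A.n} {a : Fin m × Bool}
    (ht : A.HasType t a) (k : ℕ) :
    (A.readable t k).ncard ≤ (2 * m - 1) ^ k := by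
  calc _ ≤ {w | w.length = k ∧ FreeGroup.IsReduced (a :: w)}.ncard :=
        ncard_le_ncard (fun w hw => ⟨hw.1, ht.isReduced_cons hf hw.2⟩)
          ((List.finite_length_eq _ k).subset fun _ hw => hw.1)
    _ ≤ _ := by simpa using FreeGroup.ncard_setOf_isReduced_cons_le a k

theorem ncard_readable_one_le (t : Fin A.n) : (A.readable t 1).ncard ≤ 2 * m := by
  calc _ ≤ ((fun a => [a]) '' (univ : Set (Fin m × Bool))).ncard := by
        refine ncard_le_ncard (fun w ⟨hw, _⟩ => ?_) (toFinite _)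
        obtain ⟨a, rfl⟩ := List.length_eq_one_iff.1 hw
        exact ⟨a, mem_univ a, rfl⟩
    _ ≤ (univ : Set (Fin m × Bool)).ncard := ncard_image_le (toFinite _)
    _ = 2 * m := by simp [mul_comm]

theorem ncard_readable_add_le {i j B : ℕ} (hi : 0 < i)
    (hB : ∀ t a, A.HasType t a → (A.readable t j).ncard ≤ B) (t : Fin A.n) :
    (A.readable t (i + j)).ncard ≤ (A.readable t i).ncard * B := by
  set U := (A.readable_finite t i).toFinset
  set fiber := fun u => {v : List (Fin m × Bool) | v.length = j ∧ (A.evalFrom t (u ++ v)).isSome}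
  have hsub : A.readable t (i + j) ⊆ ⋃ u ∈ U, (u ++ ·) '' fiber u := by
    rintro w ⟨hlen, hw⟩
    rw [← List.take_append_drop i w, evalFrom_append] at hw
    simp only [mem_iUnion]
    refine ⟨w.take i, (Finite.mem_toFinset _).2 ⟨by simp [hlen], Option.isSome_of_isSome_bind hw⟩,
      w.drop i, ⟨by simp [hlen], ?_⟩, List.take_append_drop i w⟩
    rwa [evalFrom_append]
  have hfiber : ∀ u ∈ U, (fiber u).ncard ≤ B := by
    intro u hu
    obtain ⟨hlen, hu⟩ := (Finite.mem_toFinset _).1 hu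
    obtain ⟨s, hs⟩ := Option.isSome_iff_exists.1 hu
    obtain ⟨a, u, rfl⟩ := List.exists_cons_of_length_pos (hlen ▸ hi)
    have : fiber (a :: u) = A.readable s j := by
      ext v
      simp [fiber, readable, evalFrom_append, hs]
    exact this ▸ hB s _ (hasType_getLast_of_evalFrom_cons hs)
  calc _ ≤ (⋃ u ∈ U, (u ++ ·) '' fiber u).ncard :=
        ncard_le_ncard hsub <| U.finite_toSet.biUnion fun u _ =>
          ((List.finite_length_eq _ j).subset fun _ hv => hv.1).image _
    _ ≤ ∑ u ∈ U, ((u ++ ·) '' fiber u).ncard := Finset.set_ncard_biUnion_le _ _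
    _ ≤ ∑ _u ∈ U, B := Finset.sum_le_sum fun u hu =>
        (ncard_image_of_injective _ (List.append_right_injective u)).trans_le (hfiber u hu)
    _ = _ := by
        rw [Finset.sum_const, smul_eq_mul, ← ncard_eq_toFinset_card _ (A.readable_finite t i)]

theorem ncard_readable_mul_add_le (hf : A.NoBacktrack) {N B : ℕ} (hN : 0 < N)
    (hB : ∀ t a, A.HasType t a → (A.readable t N).ncard ≤ B) (q j : ℕ) :
    ∀ t a, A.HasType t a → (A.readable t (q * N + j)).ncard ≤ B ^ q * (2 * m - 1) ^ j := by
  induction q with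
  | zero => intro t a ht; simpa using ncard_readable_le_of_hasType hf ht j
  | succ q ih =>
    intro t a ht
    calc (A.readable t ((q + 1) * N + j)).ncard
        = (A.readable t (N + (q * N + j))).ncard := by ring_nf
      _ ≤ (A.readable t N).ncard * (B ^ q * (2 * m - 1) ^ j) := ncard_readable_add_le hN ih t
      _ ≤ B * (B ^ q * (2 * m - 1) ^ j) := Nat.mul_le_mul_right _ (hB t a ht)
      _ = B ^ (q + 1) * (2 * m - 1) ^ j := by ring

theorem ncard_readable_lt_of_dead_end (hf : A.NoBacktrack)
    (he : ∀ s₁ a₁ s₂ a₂ s, A.step s₁ a₁ = some s → A.step s₂ a₂ = some s → a₁ = a₂)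
    {s : Fin A.n} {a₀ b : Fin m × Bool} (hs : A.HasType s a₀) (hb : b ≠ (a₀.1, !a₀.2))
    (hsb : A.step s b = none) {t : Fin A.n} {a : Fin m × Bool} (ht : A.HasType t a)
    {u : List (Fin m × Bool)} (hu : A.evalFrom t u = some s) {N : ℕ} (hN : u.length < N) :
    (A.readable t N).ncard < (2 * m - 1) ^ N := by
  obtain ⟨r, rfl⟩ := Nat.exists_eq_add_of_lt hN
  -- `w` cannot be read since `b` is undefined at `s`, yet `a :: w` is reduced: the last letter
  -- of `a :: u` is the type `a₀` of `s`, and `b ≠ a₀⁻¹`.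
  set w := u ++ List.replicate (r + 1) b
  have hdead : w ∉ A.readable t (u.length + r + 1) := fun hw => by
    simpa [w, readable, evalFrom_append, hu, List.replicate_succ, evalFrom_cons, hsb] using hw.2
  have hred : FreeGroup.IsReduced (a :: w) := by
    obtain ⟨s₁, hs₁⟩ := ht.evalFrom hu
    obtain ⟨s₂, hs₂⟩ := hs
    have hlast := he _ _ _ _ _ hs₁ hs₂
    refine List.isChain_append.2 ⟨ht.isReduced_cons hf (by simp [hu]),
      List.isChain_replicate_of_rel _ fun _ => rfl, fun x hx y hy => ?_⟩
    rw [List.getLast?_eq_some_getLast (List.cons_ne_nil a u), Option.mem_some_iff, hlast] at hx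
    rw [List.head?_replicate, if_neg r.succ_ne_zero, Option.mem_some_iff] at hy
    subst hx hy
    intro h₁
    by_contra h₂
    exact hb (Prod.ext h₁.symm (Bool.eq_not_iff.2 (Ne.symm h₂)))
  have hlen : w.length = u.length + r + 1 := by simp [w]; omega
  calc _ < {v | v.length = u.length + r + 1 ∧ FreeGroup.IsReduced (a :: v)}.ncard :=
        ncard_lt_ncard ⟨fun v hv => ⟨hv.1, ht.isReduced_cons hf hv.2⟩,
          fun h => hdead (h ⟨hlen, hred⟩)⟩ ((List.finite_length_eq _ _).subset fun _ hv => hv.1)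
    _ ≤ _ := by simpa using FreeGroup.ncard_setOf_isReduced_cons_le a _

theorem nk_lang_le (hf : A.NoBacktrack) (k : ℕ) : nk A.lang k ≤ (A.readable A.start k).ncard := by
  calc nk A.lang k ≤ (FreeGroup.mk '' A.readable A.start k).ncard := by
        refine ncard_le_ncard ?_ ((A.readable_finite _ _).image _)
        rintro _ ⟨⟨w, hw, rfl⟩, hlen⟩
        have hw' : (A.evalFrom A.start w).isSome := Option.isSome_iff_exists.2 ⟨_, hw⟩
        rw [glen, FreeGroup.toWord_mk, (isReduced_of_evalFrom hf hw').reduce_eq] at hlen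
        exact ⟨w, ⟨hlen, hw'⟩, rfl⟩
    _ ≤ _ := ncard_image_le (A.readable_finite _ _)

theorem IsSpecial.exists_nk_lang_succ_le (hA : A.IsSpecial)
    (hnc : ∃ s : Fin A.n, (∃ w, A.evalFrom A.accept w = some s) ∧
      ∃ a, (∃ s', A.step s' a = some s) ∧ ∃ b, b ≠ (a.1, !a.2) ∧ A.step s b = none) :
    ∃ N B, 0 < N ∧ B < (2 * m - 1) ^ N ∧
      ∀ k, nk A.lang (k + 1) ≤ 2 * m * (B ^ (k / N) * (2 * m - 1) ^ (k % N)) := by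
  obtain ⟨-, -, -, hd, he, hf⟩ := hA
  obtain ⟨s, ⟨w, hw⟩, a₀, hs, b, hb, hsb⟩ := hnc
  choose v hv using hd
  have hu : ∀ t, A.evalFrom t (v t ++ w) = some s := fun t => by
    rw [evalFrom_append, hv t]
    exact hw
  obtain ⟨N, hN⟩ : ∃ N, ∀ t, (v t ++ w).length < N :=
    ⟨Finset.univ.sup (fun t => (v t ++ w).length) + 1, fun t =>
      Nat.lt_succ_of_le (Finset.le_sup (f := fun t => (v t ++ w).length) (Finset.mem_univ t))⟩
  have hN₀ : 0 < N := (Nat.zero_le _).trans_lt (hN s)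
  have hlt : ∀ t a, A.HasType t a → (A.readable t N).ncard < (2 * m - 1) ^ N :=
    fun t a ht => ncard_readable_lt_of_dead_end hf he hs hb hsb ht (hu t) (hN t)
  refine ⟨N, (2 * m - 1) ^ N - 1, hN₀, by have := hlt s a₀ hs; omega, fun k => ?_⟩
  calc nk A.lang (k + 1) ≤ (A.readable A.start (1 + (k / N * N + k % N))).ncard := by
        rw [Nat.div_add_mod', add_comm]
        exact nk_lang_le hf _
    _ ≤ (A.readable A.start 1).ncard *
          (((2 * m - 1) ^ N - 1) ^ (k / N) * (2 * m - 1) ^ (k % N)) :=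
        ncard_readable_add_le one_pos (ncard_readable_mul_add_le hf hN₀
          (fun t a ht => Nat.le_sub_one_of_lt (hlt t a ht)) _ _) _
    _ ≤ _ := Nat.mul_le_mul_right _ (ncard_readable_one_le _)

end PAut

theorem fk_succ_le_of_nk_succ_le {m N B k : ℕ} {R : Set (FG m)} (hm : 0 < m)
    (h : nk R (k + 1) ≤ 2 * m * (B ^ (k / N) * (2 * m - 1) ^ (k % N))) :
    fk R (k + 1) ≤ ((B : ℝ) / ((2 * m - 1 : ℕ) : ℝ) ^ N) ^ (k / N) := by
  have hK : ((2 * m - 1 : ℕ) : ℝ) = 2 * m - 1 := by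
    rw [Nat.cast_sub (by omega)]
    push_cast
    ring
  have hK₀ : (0 : ℝ) < 2 * m - 1 := by
    linarith [(Nat.one_le_cast (α := ℝ)).2 hm]
  have hKk : ((2 * m - 1 : ℝ)) ^ k = ((2 * m - 1) ^ N) ^ (k / N) * (2 * m - 1) ^ (k % N) := by
    rw [← pow_mul, ← pow_add, Nat.div_add_mod]
  have h' : (nk R (k + 1) : ℝ) ≤ 2 * m * (B ^ (k / N) * (2 * m - 1) ^ (k % N)) := by
    rw [← hK]
    exact_mod_cast h
  rw [hK, fk, sphereCard, if_neg k.succ_ne_zero, Nat.add_sub_cancel]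
  calc (nk R (k + 1) : ℝ) / (2 * m * (2 * m - 1) ^ k)
      ≤ 2 * m * (B ^ (k / N) * (2 * m - 1) ^ (k % N)) / (2 * m * (2 * m - 1) ^ k) := by
        gcongr
    _ = ((B : ℝ) / (2 * m - 1) ^ N) ^ (k / N) := by
        rw [hKk, div_pow]
        field_simp

theorem stmt7_general {m : ℕ} (A : PAut m) (hA : A.IsSpecial)
    (hnc : ∃ s : Fin A.n, (∃ w, A.evalFrom A.accept w = some s) ∧
      ∃ a, (∃ s', A.step s' a = some s) ∧
        ∃ b, b ≠ (a.1, !a.2) ∧ A.step s b = none) :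
    ExpNegligible A.lang := by
  obtain ⟨N, B, hN, hB, hnk⟩ := hA.exists_nk_lang_succ_le hnc
  have hm : 0 < m := by
    obtain ⟨-, -, -, -, b, -⟩ := hnc
    exact b.1.pos
  have hKN : (B : ℝ) < ((2 * m - 1 : ℕ) : ℝ) ^ N := by exact_mod_cast hB
  exact exists_pow_lt_of_le_pow_div hN (by positivity)
    ((div_lt_one ((Nat.cast_nonneg B).trans_lt hKN)).2 hKN) fun k =>
      fk_succ_le_of_nk_succ_le hm (hnk k)

/-- if the second-type automaton `A₂` (the restriction of a special
automaton `A` to the states reachable from the final state) is not `Σ`-complete,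
then `L(A)` is exponentially λ-measurable. -/
theorem stmt7 {m : ℕ} (hm : 2 ≤ m) (A : PAut m) (hA : A.IsSpecial)
    (hnc : ∃ s : Fin A.n, (∃ w, A.evalFrom A.accept w = some s) ∧
      ∃ a, (∃ s', A.step s' a = some s) ∧
        ∃ b, b ≠ (a.1, !a.2) ∧ A.step s b = none) :
    ExpNegligible A.lang :=
  stmt7_general A hA hnc
end
end

section
/- Let F be the free group of rank m ≥ 2, let x ∈ Σ, and let M = {1} ∪ (C[x] ∖ C(x^{-1},x)). Then lim_{t→1⁻} (1−t)·g_M(t) = (2m−1)/(4m²); in particular M is thick. -/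
open Filter Set

noncomputable section

/-!
An element of `M` of length `k ≥ 1` is a reduced word that ends in `x` and does not start with
`x⁻¹`; prepending `x` matches these with the reduced words of length `k + 1` from `x` to `x`.
If `N_n(b, c)` counts the reduced words of length `n + 1` from `b` to `c`, removing the first
letter gives `N_{n+1}(b, c) + N_n(b⁻¹, c) = (2m-1)^n`, hence `N_n(c, c) = N_n(c⁻¹, c) + 1`. So
`g_n = N_{n+1}(x, x)` satisfies `g_{n+1} + g_n = (2m-1)^{n+1} + 1`, which keeps `g_n` within `1`
of `(2m-1)^{n+1}/(2m)` and gives `f_k(M) → (2m-1)/(4m²)`. Abel's limit theorem, applied to the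
series of differences `f_{k+1} - f_k`, turns this into the limit of `(1-t)·g_M(t)`.
-/

open Topology
open scoped Finset
open FreeGroup (IsReduced)

theorem tendsto_one_sub_mul_tsum_pow_of_tendsto {f : ℕ → ℝ} {L : ℝ}
    (hf : Tendsto f atTop (𝓝 L)) :
    Tendsto (fun t => (1 - t) * ∑' k, f k * t ^ k) (𝓝[<] 1) (𝓝 L) := by
  obtain ⟨C, hC⟩ : ∃ C, ∀ k, |f k| ≤ C := by
    obtain ⟨C, hC⟩ := hf.abs.bddAbove_range
    exact ⟨C, fun k => hC ⟨k, rfl⟩⟩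
  have hdiff : Tendsto (fun n => ∑ i ∈ Finset.range n, (f (i + 1) - f i)) atTop
      (𝓝 (L - f 0)) := by
    simp_rw [Finset.sum_range_sub]
    exact (hf.comp (tendsto_add_atTop_nat 0)).sub_const _
  have hlim : Tendsto (fun t => f 0 + t * ∑' k, (f (k + 1) - f k) * t ^ k) (𝓝[<] 1)
      (𝓝 (f 0 + 1 * (L - f 0))) :=
    tendsto_const_nhds.add <| (tendsto_nhdsWithin_of_tendsto_nhds tendsto_id).mul
      (Real.tendsto_tsum_powerSeries_nhdsWithin_lt hdiff)
  rw [one_mul, add_sub_cancel] at hlim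
  refine hlim.congr' ?_
  filter_upwards [Ioo_mem_nhdsLT zero_lt_one] with t ⟨ht₀, ht₁⟩
  have hs : Summable fun k => f k * t ^ k :=
    .of_norm_bounded ((summable_geometric_of_lt_one ht₀.le ht₁).mul_left C) fun k => by
      rw [norm_mul, norm_pow, Real.norm_of_nonneg ht₀.le]
      exact mul_le_mul_of_nonneg_right (hC k) (pow_nonneg ht₀.le k)
  have hshift : ∑' k, f (k + 1) * t ^ (k + 1) = ∑' k, f k * t ^ k - f 0 := by
    rw [hs.tsum_eq_zero_add]
    simp
  calc f 0 + t * ∑' k, (f (k + 1) - f k) * t ^ k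
      = f 0 + ∑' k, (f (k + 1) * t ^ (k + 1) - t * (f k * t ^ k)) := by
        rw [← tsum_mul_left]
        congr 1
        congr 1
        ext k
        ring
    _ = (1 - t) * ∑' k, f k * t ^ k := by
        rw [((summable_nat_add_iff 1).mpr hs).tsum_sub (hs.mul_left t), tsum_mul_left,
          hshift]
        ring

theorem tendsto_div_of_add_eq_pow_add_one {r : ℝ} (hr : 1 < r) {g : ℕ → ℝ} (h0 : g 0 = 1)
    (hg : ∀ n, g (n + 1) + g n = r ^ (n + 1) + 1) :
    Tendsto (fun n => g n / ((r + 1) * r ^ n)) atTop (𝓝 (r / (r + 1) ^ 2)) := by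
  have hr₀ : 0 < r := one_pos.trans hr
  set e : ℕ → ℝ := fun n => g n - r ^ (n + 1) / (r + 1)
  have he : ∀ n, 0 ≤ e n ∧ e n ≤ 1 := by
    intro n
    induction n with
    | zero =>
      have : r / (r + 1) ≤ 1 := (div_le_one (by linarith)).mpr (by linarith)
      simp only [e, h0, zero_add, pow_one]
      constructor <;> linarith [div_nonneg hr₀.le (by linarith : (0 : ℝ) ≤ r + 1)]
    | succ n ih =>
      have hrec : e (n + 1) = 1 - e n := by
        simp only [e]
        field_simp
        rw [pow_succ r (n + 1)]
        linear_combination (r + 1) * hg n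
      rw [hrec]
      constructor <;> linarith [ih.1, ih.2]
  have hD : Tendsto (fun n => ((r + 1) * r ^ n)⁻¹) atTop (𝓝 0) :=
    tendsto_inv_atTop_zero.comp
      ((tendsto_pow_atTop_atTop_of_one_lt hr).const_mul_atTop (by linarith))
  have herr : Tendsto (fun n => e n / ((r + 1) * r ^ n)) atTop (𝓝 0) :=
    squeeze_zero (fun n => div_nonneg (he n).1 (by positivity))
      (fun n => by
        rw [div_eq_mul_inv]
        exact mul_le_of_le_one_left (by positivity) (he n).2) hD
  convert herr.const_add (r / (r + 1) ^ 2) using 2 with n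
  · simp only [e]
    field_simp
    ring
  · simp

section Letters

variable {α : Type*}

def invLetter (p : α × Bool) : α × Bool := (p.1, !p.2)

theorem invLetter_involutive : Function.Involutive (invLetter (α := α)) := fun p => by
  simp [invLetter]

theorem invLetter_ne (p : α × Bool) : invLetter p ≠ p := fun h => by
  simp [invLetter, Prod.ext_iff] at h

theorem isReduced_cons_iff {b : α × Bool} {w : List (α × Bool)} :
    IsReduced (b :: w) ↔ (∀ c ∈ w.head?, c ≠ invLetter b) ∧ IsReduced w := by
  have key {p c : α × Bool} : (p.1 = c.1 → p.2 = c.2) ↔ c ≠ invLetter p := by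
    obtain ⟨p₁, p₂⟩ := p
    obtain ⟨c₁, c₂⟩ := c
    cases p₂ <;> cases c₂ <;> simp [invLetter, eq_comm]
  simp only [FreeGroup.IsReduced, List.isChain_cons, key]

end Letters

section Counting

variable {α : Type*} [Fintype α] [DecidableEq α]

instance : DecidablePred (IsReduced (α := α)) := fun w =>
  inferInstanceAs (Decidable (w.IsChain _))

variable (α) in
def reducedWords (n : ℕ) : Finset (List (α × Bool)) :=
  {w ∈ (Finset.univ : Finset (List.Vector (α × Bool) n)).image List.Vector.toList | IsReduced w}

theorem mem_reducedWords {n : ℕ} {w : List (α × Bool)} :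
    w ∈ reducedWords α n ↔ IsReduced w ∧ w.length = n := by
  simp only [reducedWords, Finset.mem_filter, Finset.mem_image, Finset.mem_univ, true_and]
  exact ⟨fun ⟨⟨v, hv⟩, h⟩ => ⟨h, hv ▸ v.toList_length⟩, fun ⟨h, hw⟩ => ⟨⟨⟨w, hw⟩, rfl⟩, h⟩⟩

-- `n` indexes the words of length `n + 1`, the range where first and last letters exist.
def countHeadLast (n : ℕ) (b c : α × Bool) : ℕ :=
  #{w ∈ reducedWords α (n + 1) | w.head? = some b ∧ w.getLast? = some c}

def countLast (n : ℕ) (c : α × Bool) : ℕ :=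
  #{w ∈ reducedWords α (n + 1) | w.getLast? = some c}

theorem card_filter_head_ne (n : ℕ) (b c : α × Bool) :
    #{w ∈ reducedWords α (n + 1) | w.getLast? = some c ∧ w.head? ≠ some (invLetter b)} =
      countHeadLast (n + 1) b c := by
  rw [countHeadLast, ← Finset.card_image_of_injective _ (List.cons_injective (a := b))]
  congr 1
  ext w'
  simp only [Finset.mem_image, Finset.mem_filter, mem_reducedWords]
  constructor
  · rintro ⟨w, ⟨⟨hred, hlen⟩, hlast, hhead⟩, rfl⟩
    obtain ⟨d, t, rfl⟩ := List.exists_cons_of_length_eq_add_one hlen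
    refine ⟨⟨isReduced_cons_iff.mpr ⟨?_, hred⟩, by simp [hlen]⟩, rfl, ?_⟩
    · simpa [eq_comm] using hhead
    · simpa [List.getLast?_cons] using hlast
  · rintro ⟨⟨hred, hlen⟩, hhead, hlast⟩
    obtain ⟨d, w, rfl⟩ := List.exists_cons_of_length_eq_add_one hlen
    obtain rfl : d = b := by simpa using hhead
    obtain ⟨hhd, hred⟩ := isReduced_cons_iff.mp hred
    obtain ⟨e, t, rfl⟩ := List.exists_cons_of_length_eq_add_one (by simpa using hlen)
    exact ⟨e :: t, ⟨⟨hred, by simpa using hlen⟩, by simpa [List.getLast?_cons] using hlast,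
      by simpa [eq_comm] using hhd⟩, rfl⟩

theorem countHeadLast_succ_add (n : ℕ) (b c : α × Bool) :
    countHeadLast (n + 1) b c + countHeadLast n (invLetter b) c = countLast n c := by
  rw [← card_filter_head_ne, countHeadLast, countLast,
    ← Finset.card_filter_add_card_filter_not (s := {w ∈ reducedWords α (n + 1) | w.getLast? = some c})
      (fun w => w.head? ≠ some (invLetter b)), Finset.filter_filter, Finset.filter_filter]
  simp only [not_not, and_comm]

theorem countLast_eq_sum (n : ℕ) (c : α × Bool) :
    countLast n c = ∑ b, countHeadLast n b c := by
  rw [countLast, Finset.card_eq_sum_card_fiberwise (f := List.head?) (t := Finset.univ)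
      fun _ _ => Finset.mem_univ _,
    Fintype.sum_option, add_eq_right.mpr]
  · simp only [countHeadLast, Finset.filter_filter, and_comm]
  · rw [Finset.card_eq_zero, Finset.filter_eq_empty_iff]
    intro w hw
    have := (mem_reducedWords.mp (Finset.mem_filter.mp hw).1).2
    simp [List.head?_eq_none_iff, List.ne_nil_of_length_eq_add_one this]

theorem countHeadLast_zero (b c : α × Bool) :
    countHeadLast 0 b c = if b = c then 1 else 0 := by
  rw [countHeadLast, ← Finset.card_singleton [b], ← Finset.card_empty,
    ← apply_ite Finset.card]
  congr 1
  ext w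
  simp only [Finset.mem_filter, mem_reducedWords]
  constructor
  · rintro ⟨⟨-, hlen⟩, hb, hc⟩
    obtain ⟨d, rfl⟩ := List.length_eq_one_iff.mp hlen
    simp only [List.head?_cons, List.getLast?_singleton, Option.some_inj] at hb hc
    simp [← hb, ← hc]
  · intro h
    split_ifs at h with hbc
    · simp [Finset.mem_singleton.mp h, hbc]
    · simp at h

theorem countLast_eq (n : ℕ) (c : α × Bool) :
    countLast n c = (2 * Fintype.card α - 1) ^ n := by
  induction n with
  | zero => simp [countLast_eq_sum, countHeadLast_zero]
  | succ n ih =>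
    have h := Finset.sum_congr rfl fun b (_ : b ∈ Finset.univ) => countHeadLast_succ_add n b c
    have hinv : ∑ b, countHeadLast n (invLetter b) c = ∑ b, countHeadLast n b c :=
      Equiv.sum_comp (invLetter_involutive.toPerm _) (countHeadLast n · c)
    rw [Finset.sum_add_distrib, hinv, ← countLast_eq_sum, ← countLast_eq_sum, Finset.sum_const,
      Finset.card_univ,
      Fintype.card_prod, Fintype.card_bool, smul_eq_mul, ih, Nat.mul_comm _ 2] at h
    rw [pow_succ, mul_comm, Nat.sub_one_mul]
    omega

theorem countHeadLast_self_eq_add_one (n : ℕ) (c : α × Bool) :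
    countHeadLast n c c = countHeadLast n (invLetter c) c + 1 := by
  induction n with
  | zero => simp [countHeadLast_zero, invLetter_ne]
  | succ n ih =>
    have h₁ := countHeadLast_succ_add n c c
    have h₂ := countHeadLast_succ_add n (invLetter c) c
    rw [invLetter_involutive c] at h₂
    omega

theorem countHeadLast_one_self (c : α × Bool) : countHeadLast 1 c c = 1 := by
  have h := countHeadLast_succ_add 0 c c
  rwa [countLast_eq, countHeadLast_zero, if_neg (invLetter_ne c), pow_zero] at h

theorem countHeadLast_self_succ_add (n : ℕ) (c : α × Bool) :
    countHeadLast (n + 2) c c + countHeadLast (n + 1) c c =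
      (2 * Fintype.card α - 1) ^ (n + 1) + 1 := by
  have h : countHeadLast (n + 2) c c + countHeadLast (n + 1) (invLetter c) c = _ :=
    countHeadLast_succ_add (n + 1) c c
  rw [countLast_eq] at h
  rw [countHeadLast_self_eq_add_one (n + 1)]
  omega

end Counting

section Cones

open FreeGroup (isReduced_toWord mk_toWord toWord_mk mul_mk toWord_mul_sublist)

variable {m : ℕ}

theorem glen_mul_le (u v : FG m) : glen (u * v) ≤ glen u + glen v := by
  simpa [glen] using (toWord_mul_sublist u v).length_le

theorem toWord_mul_of_glen_eq {u v : FG m} (h : glen (u * v) = glen u + glen v) :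
    (u * v).toWord = u.toWord ++ v.toWord :=
  (toWord_mul_sublist u v).eq_of_length (by simpa [glen] using h)

theorem glen_mk_of_isReduced {w : List (Fin m × Bool)} (h : IsReduced w) :
    glen (FreeGroup.mk w) = w.length := by
  rw [glen, toWord_mk, h.reduce_eq]

theorem mem_coneR_iff {w g : FG m} : g ∈ coneR w ↔ w.toWord <:+ g.toWord := by
  constructor
  · rintro ⟨f, rfl, h⟩
    exact ⟨f.toWord, (toWord_mul_of_glen_eq h).symm⟩
  · rintro ⟨s, hs⟩
    have hred : IsReduced s := isReduced_toWord.infix (hs ▸ List.infix_append [] s _)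
    refine ⟨FreeGroup.mk s, ?_, ?_⟩
    · rw [← mk_toWord (x := g), ← hs, ← mul_mk, mk_toWord]
    · rw [glen_mk_of_isReduced hred, glen, glen, ← hs, List.length_append]

theorem mem_dcone_iff {u v g : FG m} :
    g ∈ dcone u v ↔ ∃ s, g.toWord = u.toWord ++ s ++ v.toWord := by
  constructor
  · rintro ⟨f, rfl, h⟩
    have h₁ := glen_mul_le u f
    have h₂ := glen_mul_le (u * f) v
    rw [toWord_mul_of_glen_eq (by omega : glen (u * f * v) = glen (u * f) + glen v),
      toWord_mul_of_glen_eq (by omega : glen (u * f) = glen u + glen f)]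
    exact ⟨f.toWord, rfl⟩
  · rintro ⟨s, hs⟩
    have hred : IsReduced s := isReduced_toWord.infix (hs ▸ List.infix_append u.toWord s _)
    refine ⟨FreeGroup.mk s, ?_, ?_⟩
    · rw [← mk_toWord (x := g), hs, ← mul_mk, ← mul_mk, mk_toWord, mk_toWord]
    · rw [glen_mk_of_isReduced hred, glen, glen, glen, hs, List.length_append,
        List.length_append]

theorem mem_coneR_diff_dcone_iff {a : Fin m × Bool} {x g : FG m} (hx : x.toWord = [a]) :
    g ∈ coneR x \ dcone x⁻¹ x ↔
      g.toWord.getLast? = some a ∧ g.toWord.head? ≠ some (invLetter a) := by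
  have hxinv : x⁻¹.toWord = [invLetter a] := by
    simp [FreeGroup.toWord_inv, hx, FreeGroup.invRev, invLetter]
  rw [Set.mem_sdiff, mem_coneR_iff, mem_dcone_iff, hx, hxinv,
    List.singleton_suffix_iff_getLast?_eq_some]
  refine and_congr_right fun hlast => not_congr ⟨?_, fun hhead => ?_⟩
  · rintro ⟨s, hs⟩
    simp [hs]
  · obtain ⟨ys, hys⟩ := List.getLast?_eq_some_iff.mp hlast
    rw [hys] at hhead ⊢
    rcases ys with _ | ⟨d, s⟩
    · exact absurd (by simpa using hhead : a = invLetter a).symm (invLetter_ne a)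
    · exact ⟨s, by simpa using hhead⟩

theorem ncard_setOf_glen_eq (P : List (Fin m × Bool) → Prop) [DecidablePred P] (n : ℕ) :
    {g : FG m | P g.toWord ∧ glen g = n}.ncard = #{w ∈ reducedWords (Fin m) n | P w} := by
  rw [← Set.ncard_image_of_injective _ FreeGroup.toWord_injective, ← Set.ncard_coe_finset]
  congr 1
  ext w
  simp only [Set.mem_image, Set.mem_ofPred_eq, Finset.coe_filter, mem_reducedWords, glen]
  constructor
  · rintro ⟨g, ⟨hP, hlen⟩, rfl⟩
    exact ⟨⟨isReduced_toWord, hlen⟩, hP⟩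
  · rintro ⟨⟨hred, hlen⟩, hP⟩
    exact ⟨FreeGroup.mk w, by rw [toWord_mk, hred.reduce_eq]; exact ⟨⟨hP, hlen⟩, rfl⟩⟩

end Cones

theorem nk_succ_eq_countHeadLast {m : ℕ} {a : Fin m × Bool} {x : FG m} (hx : x.toWord = [a])
    (n : ℕ) : nk (insert 1 (coneR x \ dcone x⁻¹ x)) (n + 1) = countHeadLast (n + 1) a a := by
  rw [← card_filter_head_ne, ← ncard_setOf_glen_eq, nk]
  congr 1
  ext g
  simp only [Set.mem_ofPred_eq, Set.mem_insert_iff, ← mem_coneR_diff_dcone_iff hx]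
  refine and_congr_left fun hg => or_iff_right ?_
  rintro rfl
  simp [glen] at hg

theorem tendsto_fk_coneR_diff_dcone {m : ℕ} (hm : 2 ≤ m) {x : FG m} (hx : glen x = 1) :
    Tendsto (fk (insert 1 (coneR x \ dcone x⁻¹ x))) atTop
      (𝓝 ((2 * (m : ℝ) - 1) / (4 * (m : ℝ) ^ 2))) := by
  obtain ⟨a, ha⟩ := List.length_eq_one_iff.mp hx
  have hr : ((2 * m - 1 : ℕ) : ℝ) = 2 * m - 1 := by
    rw [Nat.cast_sub (by omega)]
    push_cast
    ring
  have hm' : (2 : ℝ) ≤ m := by exact_mod_cast hm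
  have hlim := tendsto_div_of_add_eq_pow_add_one (r := 2 * m - 1)
    (g := fun n => (countHeadLast (n + 1) a a : ℝ)) (by linarith)
    (by simp [countHeadLast_one_self])
    (fun n => by
      have h := countHeadLast_self_succ_add n a
      rw [Fintype.card_fin] at h
      have h' := congrArg (Nat.cast : ℕ → ℝ) h
      simp only [Nat.cast_add, Nat.cast_pow, Nat.cast_one, hr] at h'
      exact h')
  rw [← tendsto_add_atTop_iff_nat 1]
  convert hlim using 2 with n
  · simp [fk, nk_succ_eq_countHeadLast ha, sphereCard]
  · ring

/-- the Cesaro density of `M = {1} ∪ (C[x] ∖ C(x⁻¹,x))` is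
`(2m-1)/(4m²)`; in particular `M` is thick. -/
theorem stmt10 {m : ℕ} (hm : 2 ≤ m) (x : FG m) (hx : glen x = 1) :
    Tendsto (fun t => (1 - t) * genFun (insert (1 : FG m) (coneR x \ dcone x⁻¹ x)) t)
      (nhdsWithin 1 (Set.Iio 1)) (nhds ((2 * (m : ℝ) - 1) / (4 * (m : ℝ) ^ 2))) ∧
    IsThick (insert (1 : FG m) (coneR x \ dcone x⁻¹ x)) := by
  have h := tendsto_one_sub_mul_tsum_pow_of_tendsto (tendsto_fk_coneR_diff_dcone hm hx)
  have hm' : (2 : ℝ) ≤ m := by exact_mod_cast hm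
  exact ⟨h, _, div_pos (by linarith) (by positivity), h⟩
end
end
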